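/- Let F₁, F₂ : A → B be lenses and let E : B → C be a lens with E ∘ F₁ = E ∘ F₂ in Lens such that the get functor U E coequalises U F₁ and U F₂ in Cat. If U E is a discrete opfibration, then E coequalises F₁ and F₂ in the category Lens. -/

import Mathlib

universe u

open CategoryTheory CategoryTheory.Limits

namespace LensPaper

section OutDefs

variable {A : Type*} [Category A] {B : Type*} [Category B] {C : Type*} [Category C]

/-- The "out-set" of an object: the collection of all morphisms out of `X`,
bundled with their targets. -/
def Out (X : A) : Type _ := Σ Y : A, X ⟶ Y

/-- The identity element of an out-set. -/
def Out.id (X : A) : Out X := ⟨X, 𝟙 X⟩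

/-- Composition of a morphism out of `X` with a morphism out of its target. -/
def Out.comp {X : A} (u : Out X) (v : Out u.1) : Out X := ⟨v.1, u.2 ≫ v.2⟩

/-- Transport of out-sets along an equality of objects. -/
def Out.cast {X Y : A} (h : X = Y) (u : Out X) : Out Y := ⟨u.1, eqToHom h.symm ≫ u.2⟩

@[simp] theorem Out.cast_rfl {X : A} (u : Out X) : Out.cast rfl u = u := by
  cases u; simp [Out.cast]; rfl

theorem Out.cast_cast {X Y Z : A} (h₁ : X = Y) (h₂ : Y = Z) (u : Out X) :
    Out.cast h₂ (Out.cast h₁ u) = Out.cast (h₁.trans h₂) u := by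
  subst h₁; subst h₂; simp

/-- The action of a functor on out-sets. -/
def mapOut (F : A ⥤ B) {X : A} (u : Out X) : Out (F.obj X) := ⟨F.obj u.1, F.map u.2⟩

theorem mapOut_cast (F : A ⥤ B) {X Y : A} (h : X = Y) (u : Out X) :
    mapOut F (Out.cast h u) = Out.cast (congrArg F.obj h) (mapOut F u) := by
  subst h; simp

/-- The set of all morphisms of a category, bundled with their endpoints. -/
def Mor (A : Type*) [Category A] : Type _ := Σ (X Y : A), X ⟶ Y

/-- The action of a functor on morphisms, as a function on bundled morphisms. -/
def mapMor (F : A ⥤ B) : Mor A → Mor B := fun m => ⟨F.obj m.1, F.obj m.2.1, F.map m.2.2⟩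

/-- The set of composable pairs of morphisms of a category. -/
def CompPair (A : Type*) [Category A] : Type _ := Σ (X Y Z : A), (X ⟶ Y) × (Y ⟶ Z)

/-- The action of a functor on composable pairs. -/
def mapCompPair (F : A ⥤ B) : CompPair A → CompPair B :=
  fun p => ⟨F.obj p.1, F.obj p.2.1, F.obj p.2.2.1, (F.map p.2.2.2.1, F.map p.2.2.2.2)⟩

/-- A functor is a discrete opfibration if every morphism out of `F.obj X`
has a unique lift to a morphism out of `X`. -/
def IsDiscreteOpfibration (F : A ⥤ B) : Prop :=
  ∀ (X : A) (u : Out (F.obj X)), ∃! v : Out X, mapOut F v = u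

/-- A cosieve is an injective-on-objects discrete opfibration. -/
def IsCosieve (F : A ⥤ B) : Prop :=
  IsDiscreteOpfibration F ∧ Function.Injective F.obj

end OutDefs

/-- An (asymmetric delta) lens: a get functor together with put functions
satisfying PutGet, PutId and PutPut. -/
structure DLens (A : Type*) (B : Type*) [Category A] [Category B] where
  get : A ⥤ B
  put : ∀ (X : A), Out (get.obj X) → Out X
  putGet : ∀ (X : A) (u : Out (get.obj X)), mapOut get (put X u) = u
  putId : ∀ (X : A), put X (Out.id (get.obj X)) = Out.id X
  putPut : ∀ (X : A) (u : Out (get.obj X)) (v : Out u.1) (h : u.1 = get.obj (put X u).1),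
      put X (u.comp v) = (put X u).comp (put (put X u).1 (Out.cast h v))

namespace DLens

variable {A : Type*} [Category A] {B : Type*} [Category B] {C : Type*} [Category C]

theorem put_cast (F : DLens A B) {X₁ X₂ : A} (e : X₁ = X₂) (u : Out (F.get.obj X₁)) :
    Out.cast e (F.put X₁ u) = F.put X₂ (Out.cast (congrArg F.get.obj e) u) := by
  subst e; simp

/-- The identity lens. -/
def id (A : Type*) [Category A] : DLens A A where
  get := Functor.id A
  put X u := u
  putGet X u := rfl
  putId X := rfl
  putPut X u v h := by
    have hv : Out.cast h v = v := Out.cast_rfl v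
    rw [hv]

/-- Composition of lenses. -/
def comp (F : DLens A B) (G : DLens B C) : DLens A C where
  get := F.get ⋙ G.get
  put X u := F.put X (G.put (F.get.obj X) u)
  putGet X u := by
    show mapOut G.get (mapOut F.get (F.put X (G.put (F.get.obj X) u))) = u
    rw [F.putGet, G.putGet]
  putId X := by
    show F.put X (G.put (F.get.obj X) (Out.id (G.get.obj (F.get.obj X)))) = Out.id X
    rw [G.putId, F.putId]
  putPut X u v h := by
    have h₁ : u.1 = G.get.obj (G.put (F.get.obj X) u).1 :=
      (congrArg Sigma.fst (G.putGet (F.get.obj X) u)).symm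
    show F.put X (G.put (F.get.obj X) (u.comp v)) = _
    rw [G.putPut (F.get.obj X) u v h₁]
    have h₂ : (G.put (F.get.obj X) u).1 =
        F.get.obj (F.put X (G.put (F.get.obj X) u)).1 :=
      (congrArg Sigma.fst (F.putGet X (G.put (F.get.obj X) u))).symm
    rw [F.putPut X (G.put (F.get.obj X) u) _ h₂]
    rw [put_cast G h₂, Out.cast_cast]

end DLens

/-- The category of small categories and (asymmetric delta) lenses. -/
def LensCat : Type (u + 1) := Cat.{u, u}

/-- Regard a small category as an object of the category of lenses. -/
def LensCat.of (C : Cat.{u, u}) : LensCat.{u} := C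

/-- The underlying small category of an object of the category of lenses. -/
def LensCat.toCat (A : LensCat.{u}) : Cat.{u, u} := A

instance : Category.{u} LensCat.{u} where
  Hom A B := DLens A.toCat B.toCat
  id A := DLens.id A.toCat
  comp F G := F.comp G
  id_comp F := rfl
  comp_id F := rfl
  assoc F G H := rfl

/-- The get functor of a lens, i.e. a morphism of `LensCat` regarded as a `DLens`. -/
def LensCat.get {A B : LensCat.{u}} (F : A ⟶ B) : A.toCat ⟶ B.toCat := (DLens.get F).toCatHom

/-- The identity-on-objects forgetful functor from the category of lenses to the
category of small categories and functors, sending a lens to its get functor. -/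
def lensForget : LensCat.{u} ⥤ Cat.{u, u} where
  obj A := A.toCat
  map F := (DLens.get F).toCatHom
  map_id A := rfl
  map_comp F G := rfl

end LensPaper
open CategoryTheory CategoryTheory.Limits LensPaper

/-!
The get functor `H` of the comparison lens is forced by the coequaliser in `Cat`, and PutGet for
`E` forces its put at `E b` to be `u ↦ E (put_K b u)`. Since `E` is a discrete opfibration,
`put_E b (E v) = v`, so this lens composes with `E` to `K`. What remains is that the formula does
not depend on the choice of `b` over `E b`. The assignment `b ↦ (E b, u ↦ E (put_K b u))` is a
function on objects of `B` that coequalises `F1` and `F2` (by `F1 ⨾ K = F2 ⨾ K` and PutGet for the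
`Fi`), and mapping into codiscrete categories shows that the object function of a coequaliser in
`Cat` is a coequaliser of sets; hence it is constant on the fibres of `E`.
-/

namespace CategoryTheory.Cat

variable {A B C : Cat.{u, u}}

abbrev codiscrete (S : Type u) : Cat.{u, u} := Cat.of (ULiftHom.{u} (Codiscrete S))

def toCodiscrete {S : Type u} (h : B → S) : B ⟶ codiscrete S :=
  (Codiscrete.functor h ⋙ ULiftHom.up).toCatHom

def ofCodiscrete {S : Type u} (F : B ⟶ codiscrete S) (b : B) : S :=
  (ULiftHom.objDown.{u, u} (F.toFunctor.obj b)).as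

theorem comp_toCodiscrete {S : Type u} (f : A ⟶ B) (h : B → S) :
    f ≫ toCodiscrete h = toCodiscrete (h ∘ f.toFunctor.obj) := rfl

theorem toCodiscrete_ofCodiscrete {S : Type u} (F : B ⟶ codiscrete S) :
    toCodiscrete (ofCodiscrete F) = F := rfl

theorem toCodiscrete_injective {S : Type u} :
    Function.Injective (toCodiscrete (B := B) (S := S)) :=
  fun _ _ e => congrArg ofCodiscrete e

variable {f g : A ⟶ B} {π : B ⟶ C} {w : f ≫ π = g ≫ π}

theorem surjective_obj_of_isColimit_cofork (hc : IsColimit (Cofork.ofπ π w)) :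
    Function.Surjective π.toFunctor.obj := by
  let inImage (X : C) : ULift.{u} Prop := ⟨∃ b, π.toFunctor.obj b = X⟩
  have h : toCodiscrete inImage = toCodiscrete fun _ => ⟨True⟩ :=
    Cofork.IsColimit.hom_ext hc <| congrArg toCodiscrete <| funext fun b =>
      congrArg ULift.up (eq_true ⟨b, rfl⟩)
  intro X
  exact of_eq_true (congrArg ULift.down (congrFun (toCodiscrete_injective h) X))

theorem apply_eq_of_obj_eq_of_isColimit_cofork (hc : IsColimit (Cofork.ofπ π w)) {S : Type u}
    (h : B → S) (hh : ∀ a, h (f.toFunctor.obj a) = h (g.toFunctor.obj a)) {b b' : B}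
    (hb : π.toFunctor.obj b = π.toFunctor.obj b') : h b = h b' := by
  have hcond : f ≫ toCodiscrete h = g ≫ toCodiscrete h := congrArg toCodiscrete (funext hh)
  have hfac := Cofork.IsColimit.π_desc' hc _ hcond
  rw [← toCodiscrete_ofCodiscrete (Cofork.IsColimit.desc hc _ hcond), comp_toCodiscrete] at hfac
  have hk := congrFun (toCodiscrete_injective hfac)
  rw [← hk b, ← hk b']
  exact congrArg (ofCodiscrete _) hb

end CategoryTheory.Cat

namespace LensPaper

section

variable {A : Type*} [Category A] {B : Type*} [Category B] {C : Type*} [Category C]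
  {D : Type*} [Category D] {H : C ⥤ D}

theorem mapOut_id (F : A ⥤ B) (X : A) : mapOut F (Out.id X) = Out.id (F.obj X) :=
  congrArg (Sigma.mk _) (F.map_id X)

theorem mapOut_comp (F : A ⥤ B) {X : A} (u : Out X) (v : Out u.1) :
    mapOut F (u.comp v) = (mapOut F u).comp (mapOut F v) :=
  congrArg (Sigma.mk _) (F.map_comp _ _)

theorem DLens.ext {L L' : DLens A B} (hget : L.get = L'.get)
    (hput : ∀ X u, L.put X u = L'.put X (cast (congrArg Out (Functor.congr_obj hget X)) u)) :
    L = L' := by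
  obtain ⟨get, put, _, _, _⟩ := L
  obtain ⟨get', put', _, _, _⟩ := L'
  obtain rfl : get = get' := hget
  obtain rfl : put = put' := funext fun X => funext (hput X)
  rfl

theorem DLens.put_mapOut_of_isDiscreteOpfibration {L : DLens A B}
    (hL : IsDiscreteOpfibration L.get) (X : A) (v : Out X) : L.put X (mapOut L.get v) = v :=
  (hL X _).unique (L.putGet X _) rfl

theorem DLens.mapOut_comp_put (L : DLens A B) (M : DLens B C) (X : A)
    (u : Out (M.get.obj (L.get.obj X))) :
    mapOut L.get ((L.comp M).put X u) = M.put (L.get.obj X) u :=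
  L.putGet X _

/-- `cast` rather than `Out.cast`, so that it reduces to the identity once `h` is substituted. -/
def pushPut (G : A ⥤ C) (L : DLens A D) (h : G ⋙ H = L.get) (a : A) :
    Σ X : C, (Out (H.obj X) → Out X) :=
  ⟨G.obj a, fun u => mapOut G (L.put a (cast (congrArg Out (Functor.congr_obj h a)) u))⟩

theorem pushPut_get_obj (F : DLens A B) (G : B ⥤ C) (K : DLens B D) (h : G ⋙ H = K.get)
    (a : A) :
    pushPut G K h (F.get.obj a) = pushPut (F.get ⋙ G) (F.comp K) (congrArg (F.get ⋙ ·) h) a :=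
  congrArg (Sigma.mk _) (funext fun _ => congrArg (mapOut G) (F.putGet a _).symm)

theorem pushPut_get_obj_eq_of_comp_eq (F₁ F₂ : DLens A B) (G : B ⥤ C) (K : DLens B D)
    (h : G ⋙ H = K.get) (hG : F₁.get ⋙ G = F₂.get ⋙ G) (hK : F₁.comp K = F₂.comp K) (a : A) :
    pushPut G K h (F₁.get.obj a) = pushPut G K h (F₂.get.obj a) := by
  rw [pushPut_get_obj F₁, pushPut_get_obj F₂]
  congr

theorem mapOut_pushPut (G : A ⥤ C) (L : DLens A D) (h : G ⋙ H = L.get) (a : A)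
    (u : Out (H.obj (G.obj a))) : mapOut H ((pushPut G L h a).2 u) = u := by
  cases L with | mk get put putGet =>
  change G ⋙ H = get at h
  subst h
  exact putGet a u

theorem pushPut_id (G : A ⥤ C) (L : DLens A D) (h : G ⋙ H = L.get) (a : A) :
    (pushPut G L h a).2 (Out.id _) = Out.id (G.obj a) := by
  cases L with | mk get put _ putId =>
  change G ⋙ H = get at h
  subst h
  exact congrArg (mapOut G) (putId a) |>.trans (mapOut_id G a)

theorem pushPut_comp (G : A ⥤ C) (L : DLens A D) (h : G ⋙ H = L.get) (a : A)
    (u : Out (H.obj (G.obj a))) (v : Out u.1) (hv : u.1 = H.obj ((pushPut G L h a).2 u).1) :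
    (pushPut G L h a).2 (u.comp v) = ((pushPut G L h a).2 u).comp
      ((pushPut G L h (L.put a (cast (congrArg Out (Functor.congr_obj h a)) u)).1).2
        (Out.cast hv v)) := by
  cases L with | mk get put _ _ putPut =>
  change G ⋙ H = get at h
  subst h
  exact congrArg (mapOut G) (putPut a u v hv) |>.trans (mapOut_comp G _ _)

end

theorem eqRec_snd_of_eq {α : Type*} {β : α → Type*} {p : Σ a, β a} {a : α} {b : β a}
    (hp : p = ⟨a, b⟩) (h : p.1 = a) : h ▸ p.2 = b := by
  subst hp; rfl

section Descent

variable {B : Type*} [Category B] {C : Type*} [Category C] {D : Type*} [Category D]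
  (E : DLens B C) (K : DLens B D) {H : C ⥤ D} (hfac : E.get ⋙ H = K.get)
  (hsurj : Function.Surjective E.get.obj)
  (hwd : ∀ b b', E.get.obj b = E.get.obj b' → pushPut E.get K hfac b = pushPut E.get K hfac b')

noncomputable def descPut (X : C) : Out (H.obj X) → Out X :=
  (show (pushPut E.get K hfac (hsurj X).choose).1 = X from (hsurj X).choose_spec) ▸
    (pushPut E.get K hfac (hsurj X).choose).2

include hwd in
theorem descPut_obj (b : B) : descPut E K hfac hsurj (E.get.obj b) = (pushPut E.get K hfac b).2 :=
  eqRec_snd_of_eq (hwd _ b (hsurj _).choose_spec) _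

include hwd in
noncomputable def descLens : DLens C D where
  get := H
  put := descPut E K hfac hsurj
  putGet X u := by
    obtain ⟨b, rfl⟩ := hsurj X
    rw [descPut_obj E K hfac hsurj hwd]
    exact mapOut_pushPut _ _ _ _ _
  putId X := by
    obtain ⟨b, rfl⟩ := hsurj X
    rw [descPut_obj E K hfac hsurj hwd]
    exact pushPut_id _ _ _ _
  putPut X u v h := by
    obtain ⟨b, rfl⟩ := hsurj X
    have key := descPut_obj E K hfac hsurj hwd b
    generalize descPut E K hfac hsurj (E.get.obj b) = φ at key h ⊢
    subst key
    exact (pushPut_comp _ _ _ _ _ _ h).trans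
      (congrArg _ (congrFun (descPut_obj E K hfac hsurj hwd _).symm _))

theorem comp_descLens (hE : IsDiscreteOpfibration E.get) :
    E.comp (descLens E K hfac hsurj hwd) = K :=
  DLens.ext hfac fun b u => by
    change E.put b (descPut E K hfac hsurj (E.get.obj b) u) = _
    rw [descPut_obj E K hfac hsurj hwd]
    exact E.put_mapOut_of_isDiscreteOpfibration hE b _

theorem eq_descLens {m : DLens C D} (hget : m.get = H) (hm : E.comp m = K) :
    m = descLens E K hfac hsurj hwd := by
  subst hget hm
  refine DLens.ext rfl fun X u => ?_
  obtain ⟨b, rfl⟩ := hsurj X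
  change _ = descPut _ _ _ hsurj (E.get.obj b) u
  rw [descPut_obj E _ _ hsurj hwd]
  exact (E.mapOut_comp_put m b u).symm

end Descent

end LensPaper

/-- Let `F1, F2 : A ⟶ B` be lenses and `E : B ⟶ C` a cofork of
them in `Lens` whose get functor coequalises `U F1` and `U F2` in `Cat`. If the
get functor of `E` is a discrete opfibration, then `E` coequalises `F1` and `F2`
in `Lens`. -/
theorem coequaliser_reflected_of_discreteOpfibration (A B C : LensCat.{u})
    (F1 F2 : A ⟶ B) (E : B ⟶ C) (w : F1 ≫ E = F2 ≫ E)
    (wU : lensForget.map F1 ≫ lensForget.map E = lensForget.map F2 ≫ lensForget.map E)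
    (hUE : IsColimit (Cofork.ofπ (lensForget.map E) wU))
    (hdopf : IsDiscreteOpfibration (DLens.get E)) :
    Nonempty (IsColimit (Cofork.ofπ E w)) := by
  refine ⟨Cofork.IsColimit.ofExistsUnique fun s => ?_⟩
  let K : B ⟶ s.pt := s.π
  have hK : F1 ≫ K = F2 ≫ K := s.condition
  have hKU : lensForget.map F1 ≫ lensForget.map K = lensForget.map F2 ≫ lensForget.map K :=
    congrArg lensForget.map hK
  let H := (Cofork.IsColimit.desc hUE _ hKU).toFunctor
  have hfac : E.get ⋙ H = K.get :=
    congrArg Cat.Hom.toFunctor (Cofork.IsColimit.π_desc' hUE _ hKU)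
  have hsurj := Cat.surjective_obj_of_isColimit_cofork hUE
  have hwd : ∀ b b', E.get.obj b = E.get.obj b' →
      pushPut E.get K hfac b = pushPut E.get K hfac b' := fun _ _ =>
    Cat.apply_eq_of_obj_eq_of_isColimit_cofork hUE (pushPut E.get K hfac)
      (pushPut_get_obj_eq_of_comp_eq F1 F2 E.get K hfac (congrArg Cat.Hom.toFunctor wU) hK)
  refine ⟨descLens E K hfac hsurj hwd, comp_descLens E K hfac hsurj hwd hdopf, fun m hm => ?_⟩
  have hmU : lensForget.map m = Cofork.IsColimit.desc hUE _ hKU :=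
    Cofork.IsColimit.hom_ext hUE <|
      (congrArg lensForget.map hm).trans (Cofork.IsColimit.π_desc' hUE _ hKU).symm
  exact eq_descLens E K hfac hsurj hwd (congrArg Cat.Hom.toFunctor hmU) hm
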